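/- arXiv:2011.15019 — 3 statements merged into one kernel-verified Lean document; each statement's English description precedes it below -/
import Mathlib

section
/- Let G be a connected simple graph on a finite nonempty vertex set V, suppose G admits a burning sequence of length b ≥ 1, and let (s_1, s_2, …) be a farthest-first traversal of G. Then every sequence of length 3b − 2 whose first b entries are s_1, …, s_b (and whose remaining 2b − 2 entries are arbitrary vertices of V) is a burning sequence for G. In particular, for every vertex v ∈ V there exists an index i ∈ {1, …, b} with d(v, s_i) ≤ (3b − 2) − i. -/
/-- A sequence `s` (0-indexed; entry `j` plays the role of `s_{j+1}`) is a
burning sequence of length `k` for `G` if every vertex `v` is reachable from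
some entry `s j` (with `j < k`) at distance at most `k - (j+1)`. -/
def IsBurningSeq {V : Type*} (G : SimpleGraph V) (k : ℕ) (s : ℕ → V) : Prop :=
  ∀ v : V, ∃ j, j < k ∧ G.Reachable (s j) v ∧ G.dist (s j) v ≤ k - (j + 1)

/-- The set `{s_1, …, s_n}` of the first `n` entries of the sequence `s`. -/
def prefixSet {V : Type*} (s : ℕ → V) (n : ℕ) : Set V := s '' Set.Iio n

/-- Distance from a vertex to a set of vertices: `d(v,S) = min_{u ∈ S} d(v,u)`. -/
noncomputable def dSet {V : Type*} (G : SimpleGraph V) (v : V) (S : Set V) : ℕ :=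
  sInf (G.dist v '' S)

/-- `s` is a farthest-first traversal of `G`: for every `i ≥ 1` (0-indexed),
`s i` realizes the maximum distance to the set of previously chosen vertices. -/
def IsFFT {V : Type*} (G : SimpleGraph V) (s : ℕ → V) : Prop :=
  ∀ i : ℕ, 1 ≤ i →
    dSet G (s i) (prefixSet s i) = sSup (Set.range fun v : V => dSet G v (prefixSet s i))

/-- The burning number: the minimum length of a burning sequence for `G`. -/
noncomputable def burningNumber {V : Type*} (G : SimpleGraph V) : ℕ :=
  sInf {k | ∃ s : ℕ → V, IsBurningSeq G k s}

/-!
Let `r = d(s_{b+1}, {s_1, …, s_b})`. By the farthest-first rule every vertex lies within `r`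
of `{s_1, …, s_b}`, and the radii `d(s_i, {s_1, …, s_{i-1}})` do not increase, so the `b + 1`
vertices `s_1, …, s_{b+1}` are pairwise at distance at least `r`. A burning sequence of length
`b` covers the graph by `b` balls of radius at most `b - 1`, so two of these vertices share a ball
and `r ≤ 2b - 2`. Every vertex is therefore within `2b - 2 ≤ (3b - 2) - i` of some `s_i`, `i ≤ b`.
-/

section Prefix

variable {V : Type*} (s : ℕ → V)

lemma mem_prefixSet {i n : ℕ} (h : i < n) : s i ∈ prefixSet s n :=
  ⟨i, h, rfl⟩

lemma prefixSet_mono : Monotone (prefixSet s) :=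
  fun _ _ hmn => Set.image_mono (Set.Iio_subset_Iio hmn)

lemma prefixSet_nonempty {n : ℕ} (hn : 1 ≤ n) : (prefixSet s n).Nonempty :=
  ⟨s 0, mem_prefixSet s hn⟩

end Prefix

section SetDistance

variable {V : Type*} (G : SimpleGraph V) (v : V) {S T : Set V}

lemma dSet_le_dist_of_mem {u : V} (hu : u ∈ S) : dSet G v S ≤ G.dist v u :=
  Nat.sInf_le ⟨u, hu, rfl⟩

lemma exists_mem_dSet_eq_dist (hS : S.Nonempty) : ∃ u ∈ S, dSet G v S = G.dist v u := by
  obtain ⟨u, hu, hdist⟩ := Nat.sInf_mem (hS.image (G.dist v))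
  exact ⟨u, hu, hdist.symm⟩

lemma dSet_le_dSet_of_subset (hST : S ⊆ T) (hS : S.Nonempty) : dSet G v T ≤ dSet G v S := by
  obtain ⟨u, hu, hdist⟩ := exists_mem_dSet_eq_dist G v hS
  exact hdist ▸ dSet_le_dist_of_mem G v (hST hu)

end SetDistance

lemma IsBurningSeq.exists_dist_le {V : Type*} {G : SimpleGraph V} {k : ℕ} {u : ℕ → V}
    (hu : IsBurningSeq G k u) (p : ℕ → V) :
    ∃ i j, i < j ∧ j ≤ k ∧ G.dist (p i) (p j) ≤ 2 * k - 2 := by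
  choose center hcenter hreach hdist using fun i => hu (p i)
  obtain ⟨i, hi, j, hj, hne, hij⟩ := Finset.exists_ne_map_eq_of_card_lt_of_maps_to
    (s := Finset.range (k + 1)) (t := Finset.range k) (f := center) (by simp)
    (fun i _ => Finset.mem_range.2 (hcenter i))
  have hdist_pair : G.dist (p i) (p j) ≤ 2 * k - 2 := by
    have hi' := hdist i
    have hj' := hdist j
    have := hcenter j
    rw [hij, G.dist_comm] at hi'
    have := (hreach j).dist_triangle_right (p i)
    omega
  rw [Finset.mem_range] at hi hj
  rcases Nat.lt_or_gt_of_ne hne with h | h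
  · exact ⟨i, j, h, by omega, hdist_pair⟩
  · exact ⟨j, i, h, by omega, G.dist_comm ▸ hdist_pair⟩

namespace IsFFT

variable {V : Type*} [Finite V] {G : SimpleGraph V} {s : ℕ → V}

lemma dSet_le (hs : IsFFT G s) {i : ℕ} (hi : 1 ≤ i) (v : V) :
    dSet G v (prefixSet s i) ≤ dSet G (s i) (prefixSet s i) :=
  hs i hi ▸ le_csSup (Set.finite_range _).bddAbove ⟨v, rfl⟩

lemma dSet_antitone (hs : IsFFT G s) {i j : ℕ} (hi : 1 ≤ i) (hij : i ≤ j) :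
    dSet G (s j) (prefixSet s j) ≤ dSet G (s i) (prefixSet s i) := by
  induction j, hij using Nat.le_induction with
  | base => rfl
  | succ j hij ih =>
    calc dSet G (s (j + 1)) (prefixSet s (j + 1))
        ≤ dSet G (s (j + 1)) (prefixSet s j) :=
          dSet_le_dSet_of_subset G _ (prefixSet_mono s j.le_succ) (prefixSet_nonempty s (by omega))
      _ ≤ dSet G (s j) (prefixSet s j) := hs.dSet_le (by omega) _
      _ ≤ dSet G (s i) (prefixSet s i) := ih

lemma dSet_le_dist (hs : IsFFT G s) {i j n : ℕ} (hij : i < j) (hjn : j ≤ n) :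
    dSet G (s n) (prefixSet s n) ≤ G.dist (s i) (s j) := by
  rw [G.dist_comm]
  exact (hs.dSet_antitone (by omega) hjn).trans (dSet_le_dist_of_mem G _ (mem_prefixSet s hij))

lemma dSet_prefixSet_le_of_isBurningSeq (hs : IsFFT G s) {b : ℕ} (hb : 1 ≤ b) {u : ℕ → V}
    (hu : IsBurningSeq G b u) (v : V) : dSet G v (prefixSet s b) ≤ 2 * b - 2 := by
  obtain ⟨i, j, hij, hjb, hdist⟩ := hu.exists_dist_le s
  calc dSet G v (prefixSet s b) ≤ dSet G (s b) (prefixSet s b) := hs.dSet_le hb v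
    _ ≤ G.dist (s i) (s j) := hs.dSet_le_dist hij hjb
    _ ≤ 2 * b - 2 := hdist

lemma exists_dist_le_of_isBurningSeq (hs : IsFFT G s) {b : ℕ} (hb : 1 ≤ b) {u : ℕ → V}
    (hu : IsBurningSeq G b u) (v : V) : ∃ j < b, G.dist v (s j) ≤ 2 * b - 2 := by
  obtain ⟨_, ⟨j, hj, rfl⟩, hdist⟩ := exists_mem_dSet_eq_dist G v (prefixSet_nonempty s hb)
  exact ⟨j, hj, hdist ▸ hs.dSet_prefixSet_le_of_isBurningSeq hb hu v⟩

end IsFFT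

theorem stmt0_general {V : Type*} [Fintype V] (G : SimpleGraph V) (hG : G.Connected)
    (b : ℕ) (hb : 1 ≤ b) (hex : ∃ u : ℕ → V, IsBurningSeq G b u)
    (s : ℕ → V) (hs : IsFFT G s) :
    (∀ t : ℕ → V, (∀ j, j < b → t j = s j) → IsBurningSeq G (3 * b - 2) t) ∧
    (∀ v : V, ∃ j, j < b ∧ G.dist v (s j) ≤ 3 * b - 2 - (j + 1)) := by
  obtain ⟨u, hu⟩ := hex
  have hnear := hs.exists_dist_le_of_isBurningSeq hb hu
  refine ⟨fun t ht v => ?_, fun v => ?_⟩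
  · obtain ⟨j, hj, hdist⟩ := hnear v
    rw [G.dist_comm] at hdist
    exact ⟨j, by omega, ht j hj ▸ hG.preconnected _ _, ht j hj ▸ by omega⟩
  · obtain ⟨j, hj, hdist⟩ := hnear v
    exact ⟨j, hj, by omega⟩

/-- if `G` is connected on a finite nonempty vertex set, admits a
burning sequence of length `b ≥ 1`, and `s` is a farthest-first traversal, then
every sequence of length `3b - 2` whose first `b` entries agree with `s` is a
burning sequence; in particular every vertex `v` has some `j < b` with
`d(v, s j) ≤ (3b - 2) - (j + 1)`. -/
theorem stmt0 {V : Type*} [Fintype V] [Nonempty V] (G : SimpleGraph V) (hG : G.Connected)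
    (b : ℕ) (hb : 1 ≤ b) (hex : ∃ u : ℕ → V, IsBurningSeq G b u)
    (s : ℕ → V) (hs : IsFFT G s) :
    (∀ t : ℕ → V, (∀ j, j < b → t j = s j) → IsBurningSeq G (3 * b - 2) t) ∧
    (∀ v : V, ∃ j, j < b ∧ G.dist v (s j) ≤ 3 * b - 2 - (j + 1)) :=
  stmt0_general G hG b hb hex s hs
end

section
/- Let G be a connected simple graph on a finite nonempty vertex set V with burning number b(G) (the minimum length of a burning sequence for G), and let (s_1, s_2, …) be any farthest-first traversal of G. Then there exists k with 1 ≤ k ≤ 3·b(G) − 2 such that the prefix (s_1, …, s_k) is a burning sequence for G. Consequently the BGP algorithm, which outputs the shortest burning prefix of a farthest-first traversal, returns a burning sequence of length at most (3 − 2/b(G))·b(G). -/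
/-!
A burning sequence of length `b` covers `V` by `b` balls of radius `b - 1`, so `V` contains no
`b + 1` vertices pairwise more than `2b - 2` apart. If the prefix of length `3b - 2` of a
farthest-first traversal does not burn `G`, some vertex `v` satisfies `d(s_j, v) ≥ 3b - 2 - j`
for all `j < 3b - 2`; since each `s_j` is chosen farthest from its predecessors, the vertices
`s_0, …, s_{b-1}, v` are then pairwise at distance at least `2b - 1`, a contradiction.
-/

open SimpleGraph

section

variable {V : Type*} {G : SimpleGraph V}

lemma IsBurningSeq.pos [Nonempty V] {k : ℕ} {t : ℕ → V} (ht : IsBurningSeq G k t) : 0 < k := by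
  obtain ⟨j, hj, -⟩ := ht (Classical.arbitrary V)
  omega

lemma SimpleGraph.Connected.isBurningSeq_diam_add_one [Finite V] (hG : G.Connected) (v₀ : V) :
    IsBurningSeq G (G.diam + 1) fun _ => v₀ := by
  have : Nonempty V := ⟨v₀⟩
  refine fun v => ⟨0, by omega, hG.preconnected v₀ v, ?_⟩
  simpa using dist_le_diam (connected_iff_ediam_ne_top.mp hG)

lemma SimpleGraph.Connected.exists_isBurningSeq_burningNumber [Finite V] (hG : G.Connected) :
    ∃ t, IsBurningSeq G (burningNumber G) t :=
  have ⟨v₀⟩ := hG.nonempty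
  Nat.sInf_mem (s := {k | ∃ t, IsBurningSeq G k t}) ⟨_, _, hG.isBurningSeq_diam_add_one v₀⟩

lemma IsBurningSeq.card_le_of_pairwise_lt_dist {ι : Type*} [Fintype ι] {k : ℕ} {t : ℕ → V}
    (ht : IsBurningSeq G k t) (f : ι → V)
    (hf : Pairwise fun i i' => 2 * (k - 1) < G.dist (f i) (f i')) : Fintype.card ι ≤ k := by
  have hcover : ∀ i, ∃ j : Fin k, G.Reachable (t j) (f i) ∧ G.dist (t j) (f i) ≤ k - 1 := by
    intro i
    obtain ⟨j, hj, hreach, hdist⟩ := ht (f i)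
    exact ⟨⟨j, hj⟩, hreach, hdist.trans (by omega)⟩
  choose center hreach hdist using hcover
  by_contra! hcard
  obtain ⟨i, i', hne, hcenter⟩ :=
    Fintype.exists_ne_map_eq_of_card_lt center (by simpa using hcard)
  have htri : G.dist (f i) (f i') ≤ G.dist (t (center i)) (f i) + G.dist (t (center i)) (f i') := by
    rw [G.dist_comm (u := t _)]
    exact (hcenter ▸ hreach i').dist_triangle_right (f i)
  have hi := hdist i
  have hi' := hcenter ▸ hdist i'
  have hfar := hf hne
  omega

lemma exists_forall_le_dist_of_not_isBurningSeq (hG : G.Preconnected) {k : ℕ} {s : ℕ → V}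
    (hs : ¬IsBurningSeq G k s) : ∃ v, ∀ j < k, k - j ≤ G.dist (s j) v := by
  simp only [IsBurningSeq, not_forall, not_exists, not_and, not_le] at hs
  obtain ⟨v, hv⟩ := hs
  exact ⟨v, fun j hj => by have := hv j hj (hG _ _); omega⟩

lemma le_dSet {v : V} {S : Set V} {m : ℕ} (hS : S.Nonempty) (hm : ∀ u ∈ S, m ≤ G.dist v u) :
    m ≤ dSet G v S :=
  le_csInf (hS.image _) (by rintro _ ⟨u, hu, rfl⟩; exact hm u hu)

lemma IsFFT.le_dist_of_lt [Finite V] {s : ℕ → V} (hs : IsFFT G s) {v : V} {m n : ℕ}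
    (hv : ∀ i < n, m ≤ G.dist (s i) v) {i j : ℕ} (hij : i < j) (hjn : j ≤ n) :
    m ≤ G.dist (s j) (s i) := by
  have hfar : m ≤ dSet G v (prefixSet s j) := by
    refine le_dSet ⟨s i, i, hij, rfl⟩ ?_
    rintro _ ⟨i', hi', rfl⟩
    rw [G.dist_comm]
    exact hv i' (by simp only [Set.mem_Iio] at hi'; omega)
  calc m ≤ dSet G v (prefixSet s j) := hfar
    _ ≤ sSup (Set.range fun w => dSet G w (prefixSet s j)) :=
      le_csSup (Set.finite_range _).bddAbove ⟨v, rfl⟩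
    _ = dSet G (s j) (prefixSet s j) := (hs j (by omega)).symm
    _ ≤ G.dist (s j) (s i) := Nat.sInf_le ⟨s i, ⟨i, hij, rfl⟩, rfl⟩

lemma IsFFT.le_dist_of_ne [Finite V] {s : ℕ → V} (hs : IsFFT G s) {v : V} {m n : ℕ}
    (hv : ∀ i < n, m ≤ G.dist (s i) v) {i j : ℕ} (hi : i < n) (hj : j < n) (hij : i ≠ j) :
    m ≤ G.dist (s i) (s j) := by
  rcases hij.lt_or_gt with h | h
  · rw [G.dist_comm]
    exact hs.le_dist_of_lt hv h hj.le
  · exact hs.le_dist_of_lt hv h hi.le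

end

theorem stmt1_general {V : Type*} [Fintype V] (G : SimpleGraph V) (hG : G.Connected)
    (s : ℕ → V) (hs : IsFFT G s) :
    ∃ k, 1 ≤ k ∧ k ≤ 3 * burningNumber G - 2 ∧ IsBurningSeq G k s := by
  obtain ⟨t, ht⟩ := hG.exists_isBurningSeq_burningNumber
  set b := burningNumber G
  have : Nonempty V := hG.nonempty
  have hb := ht.pos
  refine ⟨3 * b - 2, by omega, le_rfl, ?_⟩
  by_contra hburn
  obtain ⟨v, hv⟩ := exists_forall_le_dist_of_not_isBurningSeq hG.preconnected hburn
  have hfar : ∀ i < b, 2 * b - 1 ≤ G.dist (s i) v := fun i hi => by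
    have := hv i (by omega)
    omega
  let f : Option (Fin b) → V := fun o => o.elim v (s ·)
  have hf : Pairwise fun o o' => 2 * (b - 1) < G.dist (f o) (f o') := by
    rintro (_ | i) (_ | i') hne
    · exact absurd rfl hne
    · have := hfar i' i'.2
      rw [G.dist_comm] at this
      simp only [f, Option.elim_none, Option.elim_some]
      omega
    · have := hfar i i.2
      simp only [f, Option.elim_none, Option.elim_some]
      omega
    · have := hs.le_dist_of_ne hfar i.2 i'.2 (by simpa [Fin.val_inj] using hne)
      simp only [f, Option.elim_some]
      omega
  simpa using ht.card_le_of_pairwise_lt_dist f hf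

/-- for any farthest-first traversal `s` of a connected graph `G`
on a finite nonempty vertex set, some prefix of `s` of length `k` with
`1 ≤ k ≤ 3·b(G) - 2` is a burning sequence; hence the BGP algorithm returns a
burning sequence of length at most `(3 - 2/b(G))·b(G) = 3·b(G) - 2`. -/
theorem stmt1 {V : Type*} [Fintype V] [Nonempty V] (G : SimpleGraph V) (hG : G.Connected)
    (s : ℕ → V) (hs : IsFFT G s) :
    ∃ k, 1 ≤ k ∧ k ≤ 3 * burningNumber G - 2 ∧ IsBurningSeq G k s :=
  stmt1_general G hG s hs
end

section
/- Let G be a simple graph on a finite vertex set V and let k ≤ |V|. If G admits a burning sequence of length k (possibly with repeated vertices), then G admits an injective burning sequence of length k, i.e., a burning sequence (s_1, …, s_k) in which all k vertices are pairwise distinct. Consequently, the minimum length of a burning sequence with repetitions allowed equals the minimum length of an injective burning sequence. -/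
theorem IsBurningSeq.of_forall_exists_le {V : Type*} {G : SimpleGraph V} {k : ℕ} {s t : ℕ → V}
    (hs : IsBurningSeq G k s) (hts : ∀ j < k, ∃ i ≤ j, t i = s j) : IsBurningSeq G k t := by
  intro v
  obtain ⟨j, hj, hreach, hdist⟩ := hs v
  obtain ⟨i, hij, hi⟩ := hts j hj
  exact ⟨i, by omega, hi ▸ hreach, hi ▸ hdist.trans (by omega)⟩

theorem exists_injOn_Iio_forall_exists_le {α : Type*} [Fintype α] (s : ℕ → α) {n : ℕ}
    (hn : n ≤ Fintype.card α) :
    ∃ t : ℕ → α, Set.InjOn t (Set.Iio n) ∧ ∀ j < n, ∃ i ≤ j, t i = s j := by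
  classical
  induction n with
  | zero => exact ⟨s, by simp, by simp⟩
  | succ n ih =>
    obtain ⟨t, ht_inj, hts⟩ := ih (by omega)
    have hfresh : ∃ x, x ∉ t '' Set.Iio n := by
      obtain ⟨x, -, hx⟩ := Finset.exists_mem_notMem_of_card_lt_card
        (s := (Finset.range n).image t) (t := Finset.univ)
        (Finset.card_image_le.trans_lt (by simpa using hn))
      exact ⟨x, by simpa using hx⟩
    obtain ⟨x, hx, hxs⟩ : ∃ x ∉ t '' Set.Iio n, s n ∈ t '' Set.Iio n ∨ x = s n := by
      by_cases hsn : s n ∈ t '' Set.Iio n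
      · exact hfresh.imp fun x hx => ⟨hx, .inl hsn⟩
      · exact ⟨s n, hsn, .inr rfl⟩
    refine ⟨Function.update t n x, ?_, fun j hj => ?_⟩
    · intro a ha b hb hab
      simp only [Set.mem_Iio] at ha hb
      rcases Nat.lt_succ_iff_lt_or_eq.1 ha with ha | rfl <;>
        rcases Nat.lt_succ_iff_lt_or_eq.1 hb with hb | rfl
      · simp only [Function.update_of_ne ha.ne, Function.update_of_ne hb.ne] at hab
        exact ht_inj ha hb hab
      · simp only [Function.update_of_ne ha.ne, Function.update_self] at hab
        exact absurd ⟨a, ha, hab⟩ hx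
      · simp only [Function.update_of_ne hb.ne, Function.update_self] at hab
        exact absurd ⟨b, hb, hab.symm⟩ hx
      · rfl
    · rcases Nat.lt_succ_iff_lt_or_eq.1 hj with hj | rfl
      · obtain ⟨i, hij, hi⟩ := hts j hj
        exact ⟨i, hij, by rw [Function.update_of_ne (by omega), hi]⟩
      · rcases hxs with ⟨i, hi, hti⟩ | hxs
        · exact ⟨i, le_of_lt hi, by rw [Function.update_of_ne (ne_of_lt hi), hti]⟩
        · exact ⟨j, le_rfl, by rw [Function.update_self, hxs]⟩

theorem IsBurningSeq.exists_injOn {V : Type*} [Fintype V] {G : SimpleGraph V} {k : ℕ}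
    {s : ℕ → V} (hs : IsBurningSeq G k s) (hk : k ≤ Fintype.card V) :
    ∃ t : ℕ → V, IsBurningSeq G k t ∧ Set.InjOn t (Set.Iio k) := by
  obtain ⟨t, ht_inj, hts⟩ := exists_injOn_Iio_forall_exists_le s hk
  exact ⟨t, hs.of_forall_exists_le hts, ht_inj⟩

/-- if `k ≤ |V|` and `G` admits a burning sequence of length `k`
(repetitions allowed), then it admits an injective one of the same length;
consequently the minimum length with repetitions allowed equals the minimum
length over injective burning sequences. -/
theorem stmt6 {V : Type*} [Fintype V] (G : SimpleGraph V) (k : ℕ)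
    (hk : k ≤ Fintype.card V) (h : ∃ s : ℕ → V, IsBurningSeq G k s) :
    (∃ s : ℕ → V, IsBurningSeq G k s ∧ Set.InjOn s (Set.Iio k)) ∧
    sInf {m | ∃ s : ℕ → V, IsBurningSeq G m s} =
      sInf {m | ∃ s : ℕ → V, IsBurningSeq G m s ∧ Set.InjOn s (Set.Iio m)} := by
  obtain ⟨s, hs⟩ := h
  have hinj := hs.exists_injOn hk
  refine ⟨hinj, le_antisymm ?_ ?_⟩
  · obtain ⟨t, ht, -⟩ := Nat.sInf_mem (⟨k, hinj⟩ :
      {m | ∃ s : ℕ → V, IsBurningSeq G m s ∧ Set.InjOn s (Set.Iio m)}.Nonempty)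
    exact Nat.sInf_le ⟨t, ht⟩
  · have hk_mem : k ∈ {m | ∃ s : ℕ → V, IsBurningSeq G m s} := ⟨s, hs⟩
    obtain ⟨t, ht⟩ := Nat.sInf_mem ⟨k, hk_mem⟩
    exact Nat.sInf_le (ht.exists_injOn ((Nat.sInf_le hk_mem).trans hk))
end
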